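/- arXiv:1403.5729 — 2 statements merged into one kernel-verified Lean document; each statement's English description precedes it below -/
import Mathlib

section
/- Let K be a semiring and let φ be a map from the set {0,1}⁺ of nonempty binary words to K that is injective and satisfies φ(uv) = φ(u)·φ(v) for all nonempty binary words u, v. For nonempty binary words u, v put A(u,v) = [[φ(u), 0],[0, φ(v)]] and B(u,v) = [[φ(u), 0],[φ(v), 0]] in K^{2×2}. Then for all nonempty binary words u₁, v₁ and every matrix X in the submonoid of K^{2×2} generated by { A(u,v) : u,v ∈ {0,1}⁺ } ∪ { B(u,v) : u,v ∈ {0,1}⁺ }, the product B(u₁,v₁)·X is synchronizing if and only if u₁ = v₁. -/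
/-- A `2 × 2` matrix is *synchronizing* if there is a column index `i` such that an entry
`A j k` is nonzero exactly when `k = i`, and all entries of that column coincide. -/
def IsSync {K : Type*} [Semiring K] (A : Matrix (Fin 2) (Fin 2) K) : Prop :=
  ∃ i, (∀ j k, A j k ≠ 0 ↔ k = i) ∧ (∀ j j', A j i = A j' i)

lemma isSync_B_iff {K : Type*} [Semiring K] (x y : K) (hx : x ≠ 0) (hy : y ≠ 0) :
    IsSync !![x, 0; y, 0] ↔ x = y := by
  constructor
  · rintro ⟨i, h1, h2⟩
    fin_cases i
    · have := h2 0 1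
      simpa using this
    · have := (h1 0 1).mpr rfl
      simp at this
  · intro h
    refine ⟨0, ?_, ?_⟩
    · intro j k
      fin_cases j <;> fin_cases k <;> simp [hx, hy]
    · intro j j'
      fin_cases j <;> fin_cases j' <;> simp [h]

/-- Let `φ` be an injective multiplicative embedding of the free semigroup of nonempty binary
words into a semiring `K`, and let `A(u,v) = [[φ u, 0],[0, φ v]]`,
`B(u,v) = [[φ u, 0],[φ v, 0]]`. Then for nonempty words `u₁, v₁` and any `X` in the submonoid
generated by all the matrices `A(u,v)` and `B(u,v)` (for nonempty `u, v`), the product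
`B(u₁,v₁) * X` is synchronizing iff `u₁ = v₁`. -/
theorem Bmat_mul_isSync_iff {K : Type*} [Semiring K] (φ : List Bool → K)
    (hinj : ∀ u v : List Bool, u ≠ [] → v ≠ [] → φ u = φ v → u = v)
    (hmul : ∀ u v : List Bool, u ≠ [] → v ≠ [] → φ (u ++ v) = φ u * φ v)
    (u₁ v₁ : List Bool) (hu₁ : u₁ ≠ []) (hv₁ : v₁ ≠ [])
    (X : Matrix (Fin 2) (Fin 2) K)
    (hX : X ∈ Submonoid.closure
      {M : Matrix (Fin 2) (Fin 2) K | ∃ u v : List Bool, u ≠ [] ∧ v ≠ [] ∧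
        (M = !![φ u, 0; 0, φ v] ∨ M = !![φ u, 0; φ v, 0])}) :
    IsSync (!![φ u₁, 0; φ v₁, 0] * X) ↔ u₁ = v₁ := by
  -- φ is nonzero on nonempty words
  have hnz : ∀ u : List Bool, u ≠ [] → φ u ≠ 0 := by
    intro u hu h0
    have h : φ (u ++ u) = φ u := by rw [hmul u u hu hu, h0, mul_zero]
    have := hinj (u ++ u) u (by simp [hu]) hu h
    have hlen := congrArg List.length this
    simp at hlen
    exact hu hlen
  -- structure of elements of the closure
  have hstruct : X = 1 ∨ ∃ u v : List Bool, u ≠ [] ∧ v ≠ [] ∧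
      (X = !![φ u, 0; 0, φ v] ∨ X = !![φ u, 0; φ v, 0]) := by
    induction hX using Submonoid.closure_induction with
    | mem M hM => exact Or.inr hM
    | one => exact Or.inl rfl
    | mul M N _ _ ihM ihN =>
      rcases ihM with rfl | ⟨u, v, hu, hv, hM⟩
      · rw [one_mul]; exact ihN
      rcases ihN with rfl | ⟨u', v', hu', hv', hN⟩
      · rw [mul_one]; exact Or.inr ⟨u, v, hu, hv, hM⟩
      refine Or.inr ?_
      rcases hM with rfl | rfl <;> rcases hN with rfl | rfl
      · exact ⟨u ++ u', v ++ v', by simp [hu], by simp [hv],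
          Or.inl (by rw [hmul u u' hu hu', hmul v v' hv hv']; simp [Matrix.mul_fin_two])⟩
      · exact ⟨u ++ u', v ++ v', by simp [hu], by simp [hv],
          Or.inr (by rw [hmul u u' hu hu', hmul v v' hv hv']; simp [Matrix.mul_fin_two])⟩
      · exact ⟨u ++ u', v ++ u', by simp [hu], by simp [hv],
          Or.inr (by rw [hmul u u' hu hu', hmul v u' hv hu']; simp [Matrix.mul_fin_two])⟩
      · exact ⟨u ++ u', v ++ u', by simp [hu], by simp [hv],
          Or.inr (by rw [hmul u u' hu hu', hmul v u' hv hu']; simp [Matrix.mul_fin_two])⟩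
  -- key: in all cases B(u₁,v₁)*X = B(u₁++s, v₁++s) for some suffix s (possibly empty)
  have key : ∀ a b : List Bool, a ≠ [] → b ≠ [] →
      (IsSync !![φ a, 0; φ b, 0] ↔ a = b) := by
    intro a b ha hb
    rw [isSync_B_iff _ _ (hnz a ha) (hnz b hb)]
    exact ⟨fun h => hinj a b ha hb h, fun h => by rw [h]⟩
  rcases hstruct with rfl | ⟨u, v, hu, hv, hcase⟩
  · rw [mul_one]
    exact key u₁ v₁ hu₁ hv₁
  · have hne : ∀ s : List Bool, s ≠ [] → (u₁ ++ s = v₁ ++ s ↔ u₁ = v₁) :=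
      fun s _ => ⟨fun h => List.append_cancel_right h, fun h => by rw [h]⟩
    rcases hcase with rfl | rfl
    · have : !![φ u₁, 0; φ v₁, 0] * !![φ u, 0; 0, φ v]
          = !![φ (u₁ ++ u), 0; φ (v₁ ++ u), 0] := by
        rw [hmul u₁ u hu₁ hu, hmul v₁ u hv₁ hu]
        simp [Matrix.mul_fin_two]
      rw [this, key _ _ (by simp [hu₁]) (by simp [hv₁]), hne u hu]
    · have : !![φ u₁, 0; φ v₁, 0] * !![φ u, 0; φ v, 0]
          = !![φ (u₁ ++ u), 0; φ (v₁ ++ u), 0] := by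
        rw [hmul u₁ u hu₁ hu, hmul v₁ u hv₁ hu]
        simp [Matrix.mul_fin_two]
      rw [this, key _ _ (by simp [hu₁]) (by simp [hv₁]), hne u hu]
end

section
/- Let K be a semiring and let φ be a map from the set {0,1}⁺ of nonempty binary words to K that is injective and satisfies φ(uv) = φ(u)·φ(v) for all nonempty binary words u, v. Fix k ≥ 1 and nonempty binary words u_1,…,u_k, v_1,…,v_k, and put A(u,v) = [[φ(u), 0],[0, φ(v)]] and B(u,v) = [[φ(u), 0],[φ(v), 0]] in K^{2×2}. Then the finite set { A(u_i,v_i) : 1 ≤ i ≤ k } ∪ { B(u_1,v_1) } is synchronizable if and only if there exist t ≥ 1 and indices i_1,…,i_t ∈ {1,…,k} with i_t = 1 such that u_{i_1}u_{i_2}⋯u_{i_t} = v_{i_1}v_{i_2}⋯v_{i_t}. -/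
/-- A set of matrices is *synchronizable* if some nonempty finite product of its elements
(with repetitions allowed) is synchronizing. -/
def IsSynchronizable {K : Type*} [Semiring K] (S : Set (Matrix (Fin 2) (Fin 2) K)) : Prop :=
  ∃ l : List (Matrix (Fin 2) (Fin 2) K), l ≠ [] ∧ (∀ A ∈ l, A ∈ S) ∧ IsSync l.prod

/-!
Extending `φ` by `φ [] = 1` gives an injective monoid homomorphism `ψ` from all words to `K`,
which never vanishes. A product of the generators is then `!![ψ x, 0; 0, ψ y]` (no `B` factor) or
`!![ψ x, 0; ψ y, 0]`, where `x` is the `u`-word of the whole index sequence and `y` is the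
`v`-word up to and including the first `B` factor followed by the `u`-words after it. Only the
second shape can be synchronizing, and then exactly when `ψ x = ψ y`, i.e. `x = y`; cancelling the
common `u`-suffix leaves a solution ending in the first index. Conversely, a solution `l` gives
the synchronizing product `A(l) · B`.
-/

namespace FPCP

open Matrix

section WordHom

variable {α K : Type*} [MonoidWithZero K] {ψ : List α → K}

theorem ne_zero_of_injective_of_append [Nonempty α] (hψ : ∀ x y, ψ (x ++ y) = ψ x * ψ y)
    (hinj : Function.Injective ψ) (w : List α) : ψ w ≠ 0 := by
  intro hw
  obtain ⟨a⟩ := ‹Nonempty α›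
  have : w ++ [a] = w := hinj (by rw [hψ, hw, zero_mul])
  simpa using congrArg List.length this

def extendNil (φ : List α → K) (w : List α) : K := if w = [] then 1 else φ w

variable {φ : List α → K}

@[simp]
theorem extendNil_nil : extendNil φ [] = 1 := if_pos rfl

theorem extendNil_of_ne_nil {w : List α} (hw : w ≠ []) : extendNil φ w = φ w := if_neg hw

theorem extendNil_append (hmul : ∀ u v : List α, u ≠ [] → v ≠ [] → φ (u ++ v) = φ u * φ v)
    (x y : List α) : extendNil φ (x ++ y) = extendNil φ x * extendNil φ y := by
  rcases eq_or_ne x [] with rfl | hx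
  · simp
  rcases eq_or_ne y [] with rfl | hy
  · simp
  rw [extendNil_of_ne_nil (by simp [hx]), extendNil_of_ne_nil hx, extendNil_of_ne_nil hy,
    hmul x y hx hy]

theorem extendNil_injective (hinj : ∀ u v : List α, u ≠ [] → v ≠ [] → φ u = φ v → u = v)
    (hmul : ∀ u v : List α, u ≠ [] → v ≠ [] → φ (u ++ v) = φ u * φ v) :
    Function.Injective (extendNil φ) := by
  -- `φ w = 1` would give `φ (w ++ w) = φ w`, hence `w ++ w = w`.
  have ne_one : ∀ w : List α, w ≠ [] → φ w ≠ 1 := fun w hw h1 => by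
    have : w ++ w = w := hinj _ _ (by simp [hw]) hw (by rw [hmul w w hw hw, h1, one_mul])
    exact hw (by simpa using congrArg List.length this)
  intro x y hxy
  rcases eq_or_ne x [] with rfl | hx <;> rcases eq_or_ne y [] with rfl | hy
  · rfl
  · rw [extendNil_nil, extendNil_of_ne_nil hy] at hxy
    exact absurd hxy.symm (ne_one y hy)
  · rw [extendNil_nil, extendNil_of_ne_nil hx] at hxy
    exact absurd hxy (ne_one x hx)
  · rw [extendNil_of_ne_nil hx, extendNil_of_ne_nil hy] at hxy
    exact hinj x y hx hy hxy

end WordHom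

section SyncShapes

variable {K : Type*} [Semiring K]

theorem not_isSync_diag {a d : K} (ha : a ≠ 0) (hd : d ≠ 0) : ¬ IsSync !![a, 0; 0, d] := by
  rintro ⟨i, hcol, -⟩
  have h0 : (0 : Fin 2) = i := (hcol 0 0).mp (by simpa using ha)
  have h1 : (1 : Fin 2) = i := (hcol 1 1).mp (by simpa using hd)
  exact absurd (h1.trans h0.symm) (by decide)

theorem isSync_col_iff {a b : K} (ha : a ≠ 0) : IsSync !![a, 0; b, 0] ↔ a = b := by
  constructor
  · rintro ⟨i, hcol, heq⟩
    obtain rfl : (0 : Fin 2) = i := (hcol 0 0).mp (by simpa using ha)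
    simpa using heq 0 1
  · rintro rfl
    refine ⟨0, fun j k => ?_, fun j j' => ?_⟩
    · fin_cases j <;> fin_cases k <;> simp [ha]
    · fin_cases j <;> fin_cases j' <;> rfl

end SyncShapes

section WordMatrices

variable {α K : Type*} [Semiring K] (ψ : List α → K)

def diagMat (x y : List α) : Matrix (Fin 2) (Fin 2) K := !![ψ x, 0; 0, ψ y]

def colMat (x y : List α) : Matrix (Fin 2) (Fin 2) K := !![ψ x, 0; ψ y, 0]

def gens {ι : Type*} (u v : ι → List α) (z : ι) : Set (Matrix (Fin 2) (Fin 2) K) :=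
  {M | ∃ i, M = diagMat ψ (u i) (v i)} ∪ {colMat ψ (u z) (v z)}

variable {ψ} (hψ : ∀ x y, ψ (x ++ y) = ψ x * ψ y)
include hψ

theorem diagMat_mul_diagMat (x y x' y' : List α) :
    diagMat ψ x y * diagMat ψ x' y' = diagMat ψ (x ++ x') (y ++ y') := by
  simp [diagMat, hψ]

theorem diagMat_mul_colMat (x y x' y' : List α) :
    diagMat ψ x y * colMat ψ x' y' = colMat ψ (x ++ x') (y ++ y') := by
  simp [diagMat, colMat, hψ]

theorem colMat_mul_diagMat (x y x' y' : List α) :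
    colMat ψ x y * diagMat ψ x' y' = colMat ψ (x ++ x') (y ++ x') := by
  simp [diagMat, colMat, hψ]

theorem colMat_mul_colMat (x y x' y' : List α) :
    colMat ψ x y * colMat ψ x' y' = colMat ψ (x ++ x') (y ++ x') := by
  simp [colMat, hψ]

variable (hψ_nil : ψ [] = 1) {ι : Type*} (u v : ι → List α) (z : ι)
include hψ_nil

theorem prod_map_diagMat (l : List ι) :
    (l.map fun i => diagMat ψ (u i) (v i)).prod =
      diagMat ψ (l.map u).flatten (l.map v).flatten := by
  induction l with
  | nil => simp [diagMat, hψ_nil, one_fin_two]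
  | cons i l ih => simp only [List.map_cons, List.prod_cons, ih, diagMat_mul_diagMat hψ,
      List.flatten_cons]

-- The second row of a product reads `v`-words up to the first `colMat` factor, `u`-words after it.
theorem prod_eq_diagMat_or_colMat (m : List (Matrix (Fin 2) (Fin 2) K))
    (hm : ∀ M ∈ m, M ∈ gens ψ u v z) :
    (∃ l : List ι, m.prod = diagMat ψ (l.map u).flatten (l.map v).flatten) ∨
      ∃ p s : List ι, m.prod =
        colMat ψ ((p ++ z :: s).map u).flatten (((p ++ [z]).map v).flatten ++ (s.map u).flatten) := by
  induction m with
  | nil => exact .inl ⟨[], by simp [diagMat, hψ_nil, one_fin_two]⟩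
  | cons M m ih =>
    have ih := ih fun N hN => hm N (List.mem_cons_of_mem M hN)
    rw [List.prod_cons]
    obtain ⟨i, rfl⟩ | rfl := hm M List.mem_cons_self
    · obtain ⟨l, hl⟩ | ⟨p, s, hps⟩ := ih
      · exact .inl ⟨i :: l, by simp [hl, diagMat_mul_diagMat hψ]⟩
      · exact .inr ⟨i :: p, s, by simp [hps, diagMat_mul_colMat hψ]⟩
    · obtain ⟨l, hl⟩ | ⟨p, s, hps⟩ := ih
      · exact .inr ⟨[], l, by simp [hl, colMat_mul_diagMat hψ]⟩
      · exact .inr ⟨[], p ++ z :: s, by simp [hps, colMat_mul_colMat hψ]⟩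

theorem isSynchronizable_gens_iff [Nonempty α] (hinj : Function.Injective ψ) :
    IsSynchronizable (gens ψ u v z) ↔
      ∃ l : List ι, ((l ++ [z]).map u).flatten = ((l ++ [z]).map v).flatten := by
  have hne := ne_zero_of_injective_of_append hψ hinj
  constructor
  · rintro ⟨m, -, hm, hsync⟩
    obtain ⟨l, hl⟩ | ⟨p, s, hps⟩ := prod_eq_diagMat_or_colMat hψ hψ_nil u v z m hm
    · exact absurd (hl ▸ hsync) (not_isSync_diag (hne _) (hne _))
    · rw [hps, colMat, isSync_col_iff (hne _)] at hsync
      exact ⟨p, List.append_cancel_right (by simpa using hinj hsync)⟩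
  · rintro ⟨l, hl⟩
    refine ⟨l.map (fun i => diagMat ψ (u i) (v i)) ++ [colMat ψ (u z) (v z)], by simp, ?_, ?_⟩
    · simp only [gens, List.mem_append, List.mem_map, List.mem_singleton]
      rintro _ (⟨i, -, rfl⟩ | rfl)
      exacts [.inl ⟨i, rfl⟩, .inr rfl]
    · rw [List.prod_append, prod_map_diagMat hψ hψ_nil, List.prod_singleton,
        diagMat_mul_colMat hψ, colMat, isSync_col_iff (hne _)]
      simpa using congrArg ψ hl

end WordMatrices

end FPCP

open FPCP

/-- Let `φ` be an injective multiplicative embedding of the free semigroup of nonempty binary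
words into a semiring `K`, and let `A(u,v) = [[φ u, 0],[0, φ v]]`,
`B(u,v) = [[φ u, 0],[φ v, 0]]`. For nonempty words `u 0, …, u (k-1), v 0, …, v (k-1)`, the set
`{A (u i, v i) : i} ∪ {B (u 0, v 0)}` is synchronizable iff there is an index sequence
`i_1, …, i_t` (`t ≥ 1`) ending with the first index such that
`u i₁ ⋯ u iₜ = v i₁ ⋯ v iₜ`. -/
theorem fpcp_reduces_to_sync {K : Type*} [Semiring K] (φ : List Bool → K)
    (hinj : ∀ u v : List Bool, u ≠ [] → v ≠ [] → φ u = φ v → u = v)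
    (hmul : ∀ u v : List Bool, u ≠ [] → v ≠ [] → φ (u ++ v) = φ u * φ v)
    {k : ℕ} (hk : 1 ≤ k) (u v : Fin k → List Bool)
    (hu : ∀ i, u i ≠ []) (hv : ∀ i, v i ≠ []) :
    IsSynchronizable
        ({M : Matrix (Fin 2) (Fin 2) K | ∃ i, M = !![φ (u i), 0; 0, φ (v i)]} ∪
          {!![φ (u ⟨0, hk⟩), 0; φ (v ⟨0, hk⟩), 0]}) ↔
      ∃ l : List (Fin k),
        ((l ++ [(⟨0, hk⟩ : Fin k)]).map u).flatten =
          ((l ++ [(⟨0, hk⟩ : Fin k)]).map v).flatten := by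
  have hφu (i : Fin k) : extendNil φ (u i) = φ (u i) := extendNil_of_ne_nil (hu i)
  have hφv (i : Fin k) : extendNil φ (v i) = φ (v i) := extendNil_of_ne_nil (hv i)
  have hgens : gens (extendNil φ) u v ⟨0, hk⟩ =
      {M | ∃ i, M = !![φ (u i), 0; 0, φ (v i)]} ∪ {!![φ (u ⟨0, hk⟩), 0; φ (v ⟨0, hk⟩), 0]} := by
    simp only [gens, diagMat, colMat, hφu, hφv]
  rw [← hgens]
  exact isSynchronizable_gens_iff (extendNil_append hmul) extendNil_nil u v _
    (extendNil_injective hinj hmul)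
end
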